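/- The Schulze method is insensitive to bottom-ranked candidates: given an election (C,V) and a new candidate x ∉ C, the Schulze winners of (C,V) equal the Schulze winners of (C ∪ {x}, V^x) intersected with C, and moreover x is never a Schulze winner of (C ∪ {x}, V^x) when V is nonempty; here V^x is obtained from V by appending x at the bottom of every vote. -/

import Mathlib

/-- A vote: a strict linear order on candidates, encoded by an injective ranking
(smaller rank = more preferred). -/
structure Vote (C : Type*) where
  rk : C → ℕ
  inj : Function.Injective rk

namespace Vote

/-- `v.Prefers c d` means the voter ranks `c` strictly above `d`. -/
def Prefers {C : Type*} (v : Vote C) (c d : C) : Prop := v.rk c < v.rk d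

instance {C : Type*} (v : Vote C) : DecidableRel v.Prefers :=
  fun c d => inferInstanceAs (Decidable (v.rk c < v.rk d))

end Vote

/-- `Ncount V c d`: the number of votes in `V` ranking `c` above `d`. -/
def Ncount {C : Type*} (V : List (Vote C)) (c d : C) : ℕ :=
  V.countP (fun v => decide (v.Prefers c d))

/-- The pairwise margin `D(c,d) = N(c,d) - N(d,c)`. -/
def margin {C : Type*} (V : List (Vote C)) (c d : C) : ℤ :=
  (Ncount V c d : ℤ) - (Ncount V d c : ℤ)

/-- `l` is a directed path from `c` to `d` using only vertices in `A`
(a list of at least two vertices starting at `c` and ending at `d`). -/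
def IsPathOn {C : Type*} (A : Set C) (c d : C) (l : List C) : Prop :=
  2 ≤ l.length ∧ l.head? = some c ∧ l.getLast? = some d ∧ ∀ x ∈ l, x ∈ A

/-- The strength of a path: the minimum margin along its consecutive edges. -/
def pathStrength {C : Type*} (D : C → C → ℤ) (l : List C) : ℤ :=
  (((l.zip l.tail).map fun p => D p.1 p.2).min?).getD 0

/-- The set of strengths of paths from `c` to `d` within `A`. -/
def strengths {C : Type*} (A : Set C) (D : C → C → ℤ) (c d : C) : Set ℤ :=
  {s | ∃ l : List C, IsPathOn A c d l ∧ pathStrength D l = s}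

/-- `P(c,d)`: the strength of a strongest path from `c` to `d` within `A`. -/
noncomputable def strongestPath {C : Type*} (A : Set C) (D : C → C → ℤ) (c d : C) : ℤ :=
  sSup (strengths A D c d)

/-- `c` is a Schulze winner among candidates `A` w.r.t. margins `D`. -/
def SchulzeWinnerOn {C : Type*} (A : Set C) (D : C → C → ℤ) (c : C) : Prop :=
  c ∈ A ∧ ∀ d ∈ A, d ≠ c → strongestPath A D d c ≤ strongestPath A D c d

/-- `c` is a Condorcet winner among candidates `A` for the votes `V`. -/
def CondorcetWinnerOn {C : Type*} (A : Set C) (V : List (Vote C)) (c : C) : Prop :=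
  c ∈ A ∧ ∀ d ∈ A, d ≠ c → 0 < margin V c d

/-!
Every voter puts `x` last, so `x` has the smallest margin in every column: `D(x,b) = -|V|` for
`b ≠ x`, and `D(x,x) = 0 ≤ D(a,x)`. Hence an edge `a → x → b` of a path can be shortcut to
`a → b` without lowering its strength, and strongest paths between the original candidates are
the same with or without `x`. Every path out of `x` starts with an edge of margin `-|V|`, while
the direct edge `c → x` has margin `|V|`, so `P(x,c) ≤ -|V| ≤ |V| ≤ P(c,x)`, strictly if `V ≠ []`.
-/

theorem List.IsChain.cons_filter_ne {α : Type*} [DecidableEq α] {R : α → α → Prop} {x a : α}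
    {l : List α} (hdom : ∀ a b, R x b → R a b) (h : (a :: l).IsChain R) :
    (a :: l.filter (· ≠ x)).IsChain R := by
  induction l generalizing a with
  | nil => simp
  | cons b t ih =>
    rw [List.isChain_cons_cons] at h
    by_cases hb : b = x
    · subst hb
      rw [List.filter_cons_of_neg (by simp)]
      have hchain := ih h.2
      cases hf : t.filter (· ≠ b) with
      | nil => simp
      | cons c r =>
        rw [hf, List.isChain_cons_cons] at hchain
        exact List.isChain_cons_cons.2 ⟨hdom _ _ hchain.1, hchain.2⟩
    · rw [List.filter_cons_of_pos (by simpa)]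
      exact List.isChain_cons_cons.2 ⟨h.1, ih h.2⟩

section Paths

variable {C : Type*} {A : Set C} {D : C → C → ℤ}

theorem isPathOn_iff {c d : C} {l : List C} :
    IsPathOn A c d l ↔ ∃ t, l = c :: (t ++ [d]) ∧ c ∈ A ∧ d ∈ A ∧ ∀ y ∈ t, y ∈ A := by
  constructor
  · rintro ⟨hlen, hhead, hlast, hA⟩
    obtain ⟨a, r, rfl⟩ := List.exists_cons_of_ne_nil (l := l) (by rintro rfl; simp at hlen)
    obtain rfl | ⟨t, e, rfl⟩ := r.eq_nil_or_concat'
    · simp at hlen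
    rw [← List.cons_append, List.getLast?_concat, Option.some_inj] at hlast
    rw [List.head?_cons, Option.some_inj] at hhead
    subst hhead hlast
    exact ⟨t, rfl, hA _ (by simp), hA _ (by simp), fun y hy => hA y (by simp [hy])⟩
  · rintro ⟨t, rfl, hc, hd, ht⟩
    refine ⟨by simp, rfl, by rw [← List.cons_append, List.getLast?_concat], ?_⟩
    simp only [List.mem_cons, List.mem_append, List.not_mem_nil, or_false]
    rintro y (rfl | hy | rfl)
    exacts [hc, ht y hy, hd]

theorem pathStrength_pair (D : C → C → ℤ) (a b : C) : pathStrength D [a, b] = D a b := rfl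

theorem pathStrength_cons_cons_cons (D : C → C → ℤ) (a b c : C) (t : List C) :
    pathStrength D (a :: b :: c :: t) = min (D a b) (pathStrength D (b :: c :: t)) := by
  simp only [pathStrength, List.tail_cons, List.zip_cons_cons, List.map_cons, List.min?_cons]
  rfl

theorem le_pathStrength_iff {s : ℤ} {l : List C} (hl : 2 ≤ l.length) :
    s ≤ pathStrength D l ↔ l.IsChain (fun a b => s ≤ D a b) := by
  obtain ⟨a, b, t, rfl⟩ : ∃ a b t, l = a :: b :: t := by
    match l, hl with
    | a :: b :: t, _ => exact ⟨a, b, t, rfl⟩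
  clear hl
  induction t generalizing a b with
  | nil => simp [pathStrength_pair]
  | cons c t ih =>
    rw [pathStrength_cons_cons_cons, le_min_iff, ih, List.isChain_cons_cons (a := a)]

theorem isChain_pathStrength_le (D : C → C → ℤ) {l : List C} (hl : 2 ≤ l.length) :
    l.IsChain (fun a b => pathStrength D l ≤ D a b) :=
  (le_pathStrength_iff hl).1 le_rfl

theorem IsPathOn.exists_avoiding_le {x c d : C} {l : List C} (hl : IsPathOn A c d l)
    (hdom : ∀ a b, D x b ≤ D a b) (hc : c ≠ x) (hd : d ≠ x) :
    ∃ l', IsPathOn {y | y ≠ x} c d l' ∧ pathStrength D l ≤ pathStrength D l' := by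
  classical
  obtain ⟨t, rfl, -⟩ := isPathOn_iff.1 hl
  refine ⟨c :: (t.filter (· ≠ x) ++ [d]),
    isPathOn_iff.2 ⟨_, rfl, hc, hd, fun y hy => of_decide_eq_true (List.mem_filter.1 hy).2⟩, ?_⟩
  have := (isChain_pathStrength_le D (l := c :: (t ++ [d])) (by simp)).cons_filter_ne
    (fun a b h => h.trans (hdom a b))
  rw [List.filter_append, List.filter_singleton, decide_eq_true hd, cond_true] at this
  exact (le_pathStrength_iff (by simp)).2 this

theorem IsPathOn.pathStrength_le {x d : C} {l : List C} {m : ℤ} (hl : IsPathOn A x d l)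
    (hd : d ≠ x) (hm : ∀ b ≠ x, D x b ≤ m) : pathStrength D l ≤ m := by
  obtain ⟨t, rfl, -⟩ := isPathOn_iff.1 hl
  by_contra! hlt
  have hstuck : ∀ ⦃a b⦄, pathStrength D (x :: (t ++ [d])) ≤ D a b → a = x → b = x := by
    rintro a b hab rfl
    by_contra hb
    exact (hab.trans (hm b hb)).not_gt hlt
  have hchain := isChain_pathStrength_le D (l := x :: (t ++ [d])) (by simp)
  exact hd (hchain.induction (· = x) _ hstuck (fun _ => rfl) d (by simp))

theorem pair_mem_strengths {c d : C} (hc : c ∈ A) (hd : d ∈ A) :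
    D c d ∈ strengths A D c d :=
  ⟨[c, d], isPathOn_iff.2 ⟨[], rfl, hc, hd, by simp⟩, rfl⟩

theorem bddAbove_strengths {M : ℤ} (hM : ∀ a b, D a b ≤ M) (c d : C) :
    BddAbove (strengths A D c d) := by
  refine ⟨M, ?_⟩
  rintro _ ⟨l, hl, rfl⟩
  obtain ⟨t, rfl, -⟩ := isPathOn_iff.1 hl
  match t with
  | [] => exact hM c d
  | b :: r =>
    have hchain := isChain_pathStrength_le D (l := c :: (b :: r ++ [d])) (by simp)
    rw [List.cons_append, List.isChain_cons_cons] at hchain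
    exact hchain.1.trans (hM c b)

theorem strengths_mono {B : Set C} (h : A ⊆ B) (c d : C) :
    strengths A D c d ⊆ strengths B D c d := by
  rintro _ ⟨l, ⟨hlen, hhead, hlast, hA⟩, rfl⟩
  exact ⟨l, ⟨hlen, hhead, hlast, fun y hy => h (hA y hy)⟩, rfl⟩

theorem strongestPath_univ_eq_of_dominated {M : ℤ} {x c d : C} (hM : ∀ a b, D a b ≤ M)
    (hdom : ∀ a b, D x b ≤ D a b) (hc : c ≠ x) (hd : d ≠ x) :
    strongestPath Set.univ D c d = strongestPath {y | y ≠ x} D c d := by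
  apply le_antisymm
  · refine csSup_le ⟨_, pair_mem_strengths trivial trivial⟩ ?_
    rintro _ ⟨l, hl, rfl⟩
    obtain ⟨l', hl', hle⟩ := hl.exists_avoiding_le hdom hc hd
    exact hle.trans (le_csSup (bddAbove_strengths hM c d) ⟨l', hl', rfl⟩)
  · exact csSup_le_csSup (bddAbove_strengths hM c d) ⟨_, pair_mem_strengths hc hd⟩
      (strengths_mono (Set.subset_univ _) c d)

theorem strongestPath_univ_le {m : ℤ} {x c : C} (hc : c ≠ x)
    (hm : ∀ b ≠ x, D x b ≤ m) : strongestPath Set.univ D x c ≤ m :=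
  csSup_le ⟨_, pair_mem_strengths trivial trivial⟩ fun _ ⟨_, hl, hs⟩ =>
    hs ▸ hl.pathStrength_le hc hm

end Paths

section Margins

variable {C : Type*} {V : List (Vote C)} {x : C}

def RanksLast (V : List (Vote C)) (x : C) : Prop :=
  ∀ v ∈ V, ∀ c : C, c ≠ x → v.Prefers c x

theorem margin_le_length (V : List (Vote C)) (c d : C) : margin V c d ≤ V.length := by
  have : Ncount V c d ≤ V.length := List.countP_le_length
  unfold margin
  omega

theorem ncount_bottom_left (hx : RanksLast V x) {c : C} (hc : c ≠ x) : Ncount V x c = 0 :=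
  List.countP_eq_zero.2 fun v hv h => (hx v hv c hc).asymm (of_decide_eq_true h)

theorem ncount_bottom_right (hx : RanksLast V x) {c : C} (hc : c ≠ x) :
    Ncount V c x = V.length :=
  List.countP_eq_length.2 fun v hv => decide_eq_true (hx v hv c hc)

theorem margin_bottom_right (hx : RanksLast V x) {c : C} (hc : c ≠ x) :
    margin V c x = V.length := by
  simp [margin, ncount_bottom_left hx hc, ncount_bottom_right hx hc]

theorem margin_bottom_left (hx : RanksLast V x) {c : C} (hc : c ≠ x) :
    margin V x c = -V.length := by
  simp [margin, ncount_bottom_left hx hc, ncount_bottom_right hx hc]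

theorem margin_bottom_le (hx : RanksLast V x) (a b : C) : margin V x b ≤ margin V a b := by
  by_cases hb : b = x
  · subst hb
    by_cases ha : a = b
    · rw [ha]
    · rw [margin_bottom_right hx ha]
      simp [margin]
  · have : Ncount V b a ≤ V.length := List.countP_le_length
    rw [margin_bottom_left hx hb, margin]
    omega

theorem strongestPath_bottom_left_le (hx : RanksLast V x) {c : C} (hc : c ≠ x) :
    strongestPath Set.univ (margin V) x c ≤ -V.length :=
  strongestPath_univ_le hc fun _ hb => (margin_bottom_left hx hb).le

theorem length_le_strongestPath_bottom_right (hx : RanksLast V x) {c : C} (hc : c ≠ x) :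
    V.length ≤ strongestPath Set.univ (margin V) c x :=
  le_csSup (bddAbove_strengths (margin_le_length V) c x)
    (margin_bottom_right hx hc ▸ pair_mem_strengths trivial trivial)

theorem schulzeWinnerOn_univ_iff (hx : RanksLast V x) {c : C} (hc : c ≠ x) :
    SchulzeWinnerOn Set.univ (margin V) c ↔ SchulzeWinnerOn {y | y ≠ x} (margin V) c := by
  have hP {a b : C} (ha : a ≠ x) (hb : b ≠ x) :=
    strongestPath_univ_eq_of_dominated (margin_le_length V) (margin_bottom_le hx) ha hb
  constructor
  · rintro ⟨-, hwin⟩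
    refine ⟨hc, fun d hd hdc => ?_⟩
    rw [← hP hd hc, ← hP hc hd]
    exact hwin d trivial hdc
  · rintro ⟨-, hwin⟩
    refine ⟨trivial, fun d _ hdc => ?_⟩
    by_cases hd : d = x
    · subst hd
      linarith [strongestPath_bottom_left_le hx hc, length_le_strongestPath_bottom_right hx hc]
    · rw [hP hd hc, hP hc hd]
      exact hwin d hd hdc

end Margins

theorem schulze_insensitive_bottom_general {C : Type*}
    (x : C) (V : List (Vote C))
    (hx : ∀ v ∈ V, ∀ c : C, c ≠ x → v.Prefers c x)
    (hne : ∃ c : C, c ≠ x) :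
    {c : C | SchulzeWinnerOn {y : C | y ≠ x} (margin V) c} =
      {c : C | SchulzeWinnerOn Set.univ (margin V) c} ∩ {y : C | y ≠ x} ∧
    (V ≠ [] → ¬ SchulzeWinnerOn Set.univ (margin V) x) := by
  refine ⟨Set.ext fun c => ?_, fun hV hwin => ?_⟩
  · by_cases hc : c = x
    · simp [hc, SchulzeWinnerOn]
    · simp [schulzeWinnerOn_univ_iff hx hc, hc]
  · obtain ⟨c, hc⟩ := hne
    have hpos : 0 < V.length := List.length_pos_iff.2 hV
    linarith [hwin.2 c trivial hc, strongestPath_bottom_left_le hx hc,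
      length_le_strongestPath_bottom_right hx hc]

/-- Schulze is insensitive to bottom-ranked candidates: if every vote ranks `x` strictly
below every other candidate, then the Schulze winners among the original candidates
(`≠ x`) are exactly the Schulze winners of the padded election that lie among the original
candidates; moreover `x` is never a Schulze winner of the padded election when there is at
least one voter (and at least one original candidate). -/
theorem schulze_insensitive_bottom {C : Type*} [Fintype C]
    (x : C) (V : List (Vote C))
    (hx : ∀ v ∈ V, ∀ c : C, c ≠ x → v.Prefers c x)
    (hne : ∃ c : C, c ≠ x) :
    {c : C | SchulzeWinnerOn {y : C | y ≠ x} (margin V) c} =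
      {c : C | SchulzeWinnerOn Set.univ (margin V) c} ∩ {y : C | y ≠ x} ∧
    (V ≠ [] → ¬ SchulzeWinnerOn Set.univ (margin V) x) :=
  schulze_insensitive_bottom_general x V hx hne
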